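/- arXiv:1411.6090 — 2 statements merged into one kernel-verified Lean document; each statement's English description precedes it below -/
import Mathlib

section
/- For every closed subset Y ⊆ X, the relative algebras C*(Y⊂X) and D*(Y⊂X) are closed two-sided ideals of D*(X); in particular C*(Y⊂X) is a closed two-sided ideal of C*(X) and also a closed two-sided ideal of D*(Y⊂X). -/
open Metric ZeroAtInfty

variable {X : Type*} [MetricSpace X] [ProperSpace X]
variable {H : Type*} [NormedAddCommGroup H] [InnerProductSpace ℂ H] [CompleteSpace H]

/-- `T` has propagation at most `r` with respect to the representation `ρ`. -/
def HasPropagationLE (ρ : C₀(X, ℂ) →⋆ₙₐ[ℂ] (H →L[ℂ] H)) (T : H →L[ℂ] H) (r : ℝ) : Prop :=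
  ∀ φ ψ : C₀(X, ℂ),
    (∀ x ∈ tsupport ⇑φ, ∀ y ∈ tsupport ⇑ψ, r < dist x y) → ρ φ * T * ρ ψ = 0

/-- `T` is controlled (finite propagation). -/
def Controlled (ρ : C₀(X, ℂ) →⋆ₙₐ[ℂ] (H →L[ℂ] H)) (T : H →L[ℂ] H) : Prop :=
  ∃ r : ℝ, 0 ≤ r ∧ HasPropagationLE ρ T r

/-- `T` is pseudolocal. -/
def Pseudolocal (ρ : C₀(X, ℂ) →⋆ₙₐ[ℂ] (H →L[ℂ] H)) (T : H →L[ℂ] H) : Prop :=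
  ∀ φ ψ : C₀(X, ℂ), φ * ψ = 0 → IsCompactOperator ⇑(ρ φ * T * ρ ψ)

/-- `T` is locally compact. -/
def LocallyCompact (ρ : C₀(X, ℂ) →⋆ₙₐ[ℂ] (H →L[ℂ] H)) (T : H →L[ℂ] H) : Prop :=
  ∀ φ : C₀(X, ℂ), IsCompactOperator ⇑(ρ φ * T) ∧ IsCompactOperator ⇑(T * ρ φ)

/-- `T` is supported near the closed subset `Y`. -/
def SupportedNear (ρ : C₀(X, ℂ) →⋆ₙₐ[ℂ] (H →L[ℂ] H)) (Y : Set X) (T : H →L[ℂ] H) : Prop :=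
  ∃ r : ℝ, 0 ≤ r ∧ ∀ φ : C₀(X, ℂ),
    (∀ x ∈ tsupport ⇑φ, r < infDist x Y) → ρ φ * T = 0 ∧ T * ρ φ = 0

/-- `ρ` is a nondegenerate representation of `C₀(X)`. -/
def Nondegenerate (ρ : C₀(X, ℂ) →⋆ₙₐ[ℂ] (H →L[ℂ] H)) : Prop :=
  Dense (Submodule.span ℂ (⋃ φ : C₀(X, ℂ), Set.range ⇑(ρ φ)) : Set H)

/-- The Roe algebra `C*(X)`: norm closure of controlled locally compact operators. -/
def RoeAlgebra (ρ : C₀(X, ℂ) →⋆ₙₐ[ℂ] (H →L[ℂ] H)) : Set (H →L[ℂ] H) :=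
  closure {T | Controlled ρ T ∧ LocallyCompact ρ T}

/-- The structure algebra `D*(X)`: norm closure of controlled pseudolocal operators. -/
def StructureAlgebra (ρ : C₀(X, ℂ) →⋆ₙₐ[ℂ] (H →L[ℂ] H)) : Set (H →L[ℂ] H) :=
  closure {T | Controlled ρ T ∧ Pseudolocal ρ T}

/-- The relative Roe algebra `C*(Y ⊂ X)`. -/
def RelRoeAlgebra (ρ : C₀(X, ℂ) →⋆ₙₐ[ℂ] (H →L[ℂ] H)) (Y : Set X) : Set (H →L[ℂ] H) :=
  closure {T | Controlled ρ T ∧ LocallyCompact ρ T ∧ SupportedNear ρ Y T}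

/-- The relative structure algebra `D*(Y ⊂ X)`. -/
def RelStructureAlgebra (ρ : C₀(X, ℂ) →⋆ₙₐ[ℂ] (H →L[ℂ] H)) (Y : Set X) : Set (H →L[ℂ] H) :=
  closure {T | Controlled ρ T ∧ Pseudolocal ρ T ∧ SupportedNear ρ Y T}

/-!
Each algebra is the norm closure of a set of operators, so by continuity of multiplication it
suffices to show that these generating sets absorb products with controlled pseudolocal operators;
the inclusions are immediate because locally compact operators are pseudolocal.
Every `φ ∈ C₀(X)` is a norm limit of products `φ u` with `u` compactly supported, so the defining
identities only need to be checked for compactly supported `φ`. If `T` has propagation `≤ r` and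
`u ∈ C_c(X)` equals `1` on the `(r + 1)`-neighbourhood of `supp φ`, then `ρ(φ) T ρ(u) = ρ(φ) T`
and `ρ(u) T ρ(φ) = T ρ(φ)`: the differences are killed by every `ρ(e)` by finite propagation, hence
vanish by nondegeneracy. Inserting `ρ(u)` between the two factors of a product reduces each claim to
a property of a single factor against the compactly supported `u`. For pseudolocality one splits
further `u = u v + u (1 - v)`, where `v` separates `supp φ` from `supp ψ`.
-/

open Set
open scoped CStarAlgebra

section CompactOperator

variable {𝕜 E : Type*} [NontriviallyNormedField 𝕜] [NormedAddCommGroup E] [NormedSpace 𝕜 E]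

theorem IsCompactOperator.clm_mul (f : E →L[𝕜] E) {g : E →L[𝕜] E} (hg : IsCompactOperator ⇑g) :
    IsCompactOperator ⇑(f * g) :=
  hg.clm_comp f

theorem IsCompactOperator.mul_clm {f : E →L[𝕜] E} (hf : IsCompactOperator ⇑f) (g : E →L[𝕜] E) :
    IsCompactOperator ⇑(f * g) :=
  hf.comp_clm g

end CompactOperator

namespace ZeroAtInftyContinuousMap

variable {Z : Type*} [TopologicalSpace Z]

theorem isCompact_setOf_le_norm {β : Type*} [NormedAddCommGroup β] (φ : C₀(Z, β)) {ε : ℝ}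
    (hε : 0 < ε) : IsCompact {x | ε ≤ ‖φ x‖} := by
  obtain ⟨K, hK, hKφ⟩ := Filter.mem_cocompact.1 (zero_at_infty φ (ball_mem_nhds 0 hε))
  refine hK.of_isClosed_subset (isClosed_le continuous_const (map_continuous φ).norm) fun x hx => ?_
  by_contra hxK
  have hsmall : ‖φ x‖ < ε := by simpa using hKφ hxK
  exact (not_lt.2 hx) hsmall

theorem disjoint_support_tsupport_of_mul_eq_zero {φ ψ : C₀(Z, ℂ)} (h : φ * ψ = 0) :
    Disjoint (Function.support ⇑φ) (tsupport ⇑ψ) := by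
  have hψ : tsupport ⇑ψ ⊆ {z | φ z = 0} :=
    closure_minimal (fun z hz => (mul_eq_zero.1 (by simpa using congr($h z))).resolve_right hz)
      (isClosed_eq (map_continuous φ) continuous_const)
  exact disjoint_right.2 fun z hz hφz => hφz (hψ hz)

variable [RegularSpace Z] [LocallyCompactSpace Z]

theorem exists_eqOn_one_eqOn_zero {s t : Set Z} (hs : IsCompact s) (ht : IsClosed t)
    (hst : Disjoint s t) :
    ∃ u : C₀(Z, ℂ), HasCompactSupport ⇑u ∧ EqOn u 1 s ∧ EqOn u 0 t ∧ ∀ x, ‖u x‖ ≤ 1 := by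
  obtain ⟨f, hfs, hft, hfc, hf01⟩ := exists_continuous_one_zero_of_isCompact hs ht hst
  have hc : HasCompactSupport fun x => (f x : ℂ) := hfc.comp_left Complex.ofReal_zero
  refine ⟨⟨⟨fun x => (f x : ℂ), by fun_prop⟩, hc.is_zero_at_infty⟩, hc, fun x hx => ?_,
    fun x hx => ?_, fun x => ?_⟩
  · simp [hfs hx]
  · simp [hft hx]
  · simp [abs_of_nonneg (hf01 x).1, (hf01 x).2]

theorem exists_add_eq_mul_eq_zero {u φ ψ : C₀(Z, ℂ)} (hu : HasCompactSupport ⇑u)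
    (hφψ : Disjoint (tsupport ⇑φ) (tsupport ⇑ψ)) :
    ∃ u₁ u₂ : C₀(Z, ℂ), u₁ + u₂ = u ∧ φ * u₁ = 0 ∧ u₂ * ψ = 0 := by
  obtain ⟨v, -, hv1, hv0, -⟩ := exists_eqOn_one_eqOn_zero (hu.inter_right (isClosed_tsupport _))
    (isClosed_tsupport _) (hφψ.symm.mono_left inter_subset_right)
  refine ⟨u * v, u - u * v, add_sub_cancel _ _, ?_, ?_⟩
  · ext z
    by_cases hz : z ∈ tsupport ⇑φ
    · simp [hv0 hz]
    · simp [image_eq_zero_of_notMem_tsupport hz]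
  · ext z
    by_cases hz : z ∈ tsupport ⇑u ∩ tsupport ⇑ψ
    · simp [hv1 hz]
    · rcases not_and_or.1 hz with hz | hz <;> simp [image_eq_zero_of_notMem_tsupport hz]

theorem mem_closure_setOf_hasCompactSupport (φ : C₀(Z, ℂ)) :
    φ ∈ closure {φ' : C₀(Z, ℂ) | HasCompactSupport ⇑φ' ∧ tsupport ⇑φ' ⊆ Function.support ⇑φ} := by
  rw [Metric.mem_closure_iff]
  intro ε hε
  have hsep : Disjoint {x | ε / 4 ≤ ‖φ x‖} {x | ‖φ x‖ ≤ ε / 8} :=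
    disjoint_left.2 fun x (hx : ε / 4 ≤ ‖φ x‖) (hx' : ‖φ x‖ ≤ ε / 8) => by linarith
  obtain ⟨u, hu, hu1, hu0, hu_norm⟩ := exists_eqOn_one_eqOn_zero
    (φ.isCompact_setOf_le_norm (by positivity))
    (isClosed_le (map_continuous φ).norm continuous_const) hsep
  have hu_supp : tsupport ⇑u ⊆ {x | ε / 8 ≤ ‖φ x‖} :=
    closure_minimal (fun x hx => show ε / 8 ≤ ‖φ x‖ from le_of_not_ge fun h => hx (hu0 h))
      (isClosed_le continuous_const (map_continuous φ).norm)
  refine ⟨φ * u, ⟨by simpa [coe_mul] using hu.mul_left, ?_⟩, ?_⟩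
  · refine (tsupport_mul_subset_right (f := ⇑φ)).trans fun x hx => ?_
    have : ε / 8 ≤ ‖φ x‖ := hu_supp hx
    exact norm_pos_iff.1 (by linarith)
  · have hpt : ∀ x, ‖(φ - φ * u) x‖ ≤ ε / 2 := fun x => by
      rw [sub_apply, mul_apply, ← mul_one_sub, norm_mul]
      by_cases hx : ε / 4 ≤ ‖φ x‖
      · simp only [hu1 hx, Pi.one_apply, sub_self, norm_zero, mul_zero]; positivity
      · have h1u : ‖1 - u x‖ ≤ 2 := by
          linarith [norm_sub_le (1 : ℂ) (u x), norm_one (α := ℂ), hu_norm x]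
        calc ‖φ x‖ * ‖1 - u x‖ ≤ ε / 4 * 2 :=
              mul_le_mul (not_le.1 hx).le h1u (norm_nonneg _) (by positivity)
          _ = ε / 2 := by ring
    rw [dist_eq_norm, ← norm_toBCF_eq_norm]
    exact ((BoundedContinuousFunction.norm_le (by positivity)).2 hpt).trans_lt (by linarith)

end ZeroAtInftyContinuousMap

theorem exists_eqOn_one_thickening {K : Set X} (hK : IsCompact K) {a b : ℝ} (ha : 0 ≤ a)
    (hab : a < b) :
    ∃ u : C₀(X, ℂ), HasCompactSupport ⇑u ∧ EqOn u 1 (thickening a K) ∧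
      ∀ y ∈ tsupport ⇑u, ∃ x ∈ K, dist y x ≤ b := by
  obtain ⟨u, hu, hu1, hu0, -⟩ := ZeroAtInftyContinuousMap.exists_eqOn_one_eqOn_zero
    (isCompact_of_isClosed_isBounded isClosed_cthickening hK.isBounded.cthickening)
    isOpen_thickening.isClosed_compl
    (disjoint_compl_right_iff_subset.2 (cthickening_subset_thickening' (by linarith) hab K))
  refine ⟨u, hu, hu1.mono (thickening_subset_cthickening a K), fun y hy => ?_⟩
  have hsupp : Function.support ⇑u ⊆ thickening b K := fun z hz => by_contra fun hzK => hz (hu0 hzK)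
  have hy' := closure_thickening_subset_cthickening b K (closure_mono hsupp hy)
  rw [hK.cthickening_eq_biUnion_closedBall (by linarith)] at hy'
  simpa using hy'

section Representation

variable {ρ : C₀(X, ℂ) →⋆ₙₐ[ℂ] (H →L[ℂ] H)}

namespace Nondegenerate

omit [ProperSpace X] in
theorem eq_zero_of_forall_mul_map_eq_zero (hρ : Nondegenerate ρ) {B : H →L[ℂ] H}
    (h : ∀ e, B * ρ e = 0) : B = 0 := by
  have hspan : Submodule.span ℂ (⋃ e, range (ρ e)) ≤ LinearMap.ker (B : H →ₗ[ℂ] H) :=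
    Submodule.span_le.2 <| iUnion_subset fun e => range_subset_iff.2 fun v => by
      simpa using congr($(h e) v)
  have hker : univ ⊆ (LinearMap.ker (B : H →ₗ[ℂ] H) : Set H) :=
    hρ.closure_eq ▸ closure_minimal hspan B.isClosed_ker
  ext v
  exact hker (mem_univ v)

omit [ProperSpace X] in
theorem eq_zero_of_forall_map_mul_eq_zero (hρ : Nondegenerate ρ) {B : H →L[ℂ] H}
    (h : ∀ e, ρ e * B = 0) : B = 0 :=
  star_eq_zero.1 <| hρ.eq_zero_of_forall_mul_map_eq_zero fun e => by
    simpa [star_mul, ← map_star] using congrArg star (h (star e))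

end Nondegenerate

omit [ProperSpace X] in
theorem lt_dist_of_mem_tsupport_sub_mul {K : Set X} {r δ : ℝ} (hrδ : r < δ) {u : C₀(X, ℂ)}
    (hu : EqOn u 1 (thickening δ K)) (e : C₀(X, ℂ)) {x y : X} (hx : x ∈ K)
    (hy : y ∈ tsupport ⇑(e - u * e)) : r < dist x y := by
  have hsupp : tsupport ⇑(e - u * e) ⊆ (thickening δ K)ᶜ :=
    closure_minimal (fun z hz hzK => hz (by simp [hu hzK])) isOpen_thickening.isClosed_compl
  have hδ : δ ≤ dist y x := le_of_not_gt fun h => hsupp hy (mem_thickening_iff.2 ⟨x, hx, h⟩)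
  linarith [dist_comm x y]

theorem map_mul_mem_of_hasCompactSupport {P : Set (H →L[ℂ] H)} (hP : IsClosed P)
    (M : H →L[ℂ] H) (φ : C₀(X, ℂ))
    (h : ∀ φ' : C₀(X, ℂ), HasCompactSupport ⇑φ' → tsupport ⇑φ' ⊆ Function.support ⇑φ →
      ρ φ' * M ∈ P) :
    ρ φ * M ∈ P :=
  hP.closure_subset <| map_mem_closure (f := (ρ · * M)) ((map_continuous ρ).mul continuous_const)
    φ.mem_closure_setOf_hasCompactSupport fun φ' hφ' => h φ' hφ'.1 hφ'.2

theorem mul_map_mem_of_hasCompactSupport {P : Set (H →L[ℂ] H)} (hP : IsClosed P)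
    (M : H →L[ℂ] H) (φ : C₀(X, ℂ))
    (h : ∀ φ' : C₀(X, ℂ), HasCompactSupport ⇑φ' → tsupport ⇑φ' ⊆ Function.support ⇑φ →
      M * ρ φ' ∈ P) :
    M * ρ φ ∈ P :=
  hP.closure_subset <| map_mem_closure (f := (M * ρ ·)) (continuous_const.mul (map_continuous ρ))
    φ.mem_closure_setOf_hasCompactSupport fun φ' hφ' => h φ' hφ'.1 hφ'.2

namespace HasPropagationLE

variable {T : H →L[ℂ] H} {r δ : ℝ}

omit [ProperSpace X] in
theorem mul_map_eq_of_eqOn_one (hT : HasPropagationLE ρ T r) (hρ : Nondegenerate ρ) (hrδ : r < δ)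
    {φ u : C₀(X, ℂ)} (hu : EqOn u 1 (thickening δ (tsupport ⇑φ))) : ρ φ * T * ρ u = ρ φ * T := by
  refine (sub_eq_zero.1 <| hρ.eq_zero_of_forall_mul_map_eq_zero fun e => ?_).symm
  calc (ρ φ * T - ρ φ * T * ρ u) * ρ e = ρ φ * T * ρ (e - u * e) := by
        simp only [map_sub, map_mul, sub_mul, mul_sub, mul_assoc]
    _ = 0 := hT φ _ fun x hx y hy => lt_dist_of_mem_tsupport_sub_mul hrδ hu e hx hy

omit [ProperSpace X] in
theorem map_mul_eq_of_eqOn_one (hT : HasPropagationLE ρ T r) (hρ : Nondegenerate ρ) (hrδ : r < δ)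
    {φ u : C₀(X, ℂ)} (hu : EqOn u 1 (thickening δ (tsupport ⇑φ))) : ρ u * T * ρ φ = T * ρ φ := by
  refine (sub_eq_zero.1 <| hρ.eq_zero_of_forall_map_mul_eq_zero fun e => ?_).symm
  calc ρ e * (T * ρ φ - ρ u * T * ρ φ) = ρ (e - u * e) * T * ρ φ := by
        rw [mul_comm u e]; simp only [map_sub, map_mul, sub_mul, mul_sub, mul_assoc]
    _ = 0 := hT _ φ fun x hx y hy => by
        rw [dist_comm]; exact lt_dist_of_mem_tsupport_sub_mul hrδ hu e hy hx

theorem exists_cutoff (hT : HasPropagationLE ρ T r) (hρ : Nondegenerate ρ) (hr : 0 ≤ r)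
    {φ : C₀(X, ℂ)} (hφ : HasCompactSupport ⇑φ) :
    ∃ u : C₀(X, ℂ), HasCompactSupport ⇑u ∧
      (∀ y ∈ tsupport ⇑u, ∃ x ∈ tsupport ⇑φ, dist y x ≤ r + 2) ∧
      ρ φ * T * ρ u = ρ φ * T ∧ ρ u * T * ρ φ = T * ρ φ := by
  obtain ⟨u, hu, hu1, hu_near⟩ := exists_eqOn_one_thickening hφ (a := r + 1) (b := r + 2)
    (by linarith) (by linarith)
  exact ⟨u, hu, hu_near, hT.mul_map_eq_of_eqOn_one hρ (lt_add_one r) hu1,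
    hT.map_mul_eq_of_eqOn_one hρ (lt_add_one r) hu1⟩

end HasPropagationLE

variable {T S : H →L[ℂ] H}

omit [ProperSpace X] in
theorem LocallyCompact.pseudolocal (hT : LocallyCompact ρ T) : Pseudolocal ρ T :=
  fun φ ψ _ => (hT φ).1.mul_clm (ρ ψ)

theorem Controlled.mul (hρ : Nondegenerate ρ) (hT : Controlled ρ T) (hS : Controlled ρ S) :
    Controlled ρ (T * S) := by
  obtain ⟨rT, hrT, hTp⟩ := hT
  obtain ⟨rS, hrS, hSp⟩ := hS
  refine ⟨rT + rS + 2, by positivity, fun φ ψ hφψ => ?_⟩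
  rw [mul_assoc]
  refine map_mul_mem_of_hasCompactSupport isClosed_singleton _ φ fun φ' hφ' hφ'φ => ?_
  obtain ⟨u, -, hu_near, hu, -⟩ := hTp.exists_cutoff hρ hrT hφ'
  have huψ : ρ u * S * ρ ψ = 0 := hSp u ψ fun y hy z hz => by
    obtain ⟨x, hx, hyx⟩ := hu_near y hy
    linarith [hφψ x (hφ'φ.trans (subset_tsupport _) hx) z hz, dist_triangle x y z, dist_comm x y]
  show ρ φ' * (T * S * ρ ψ) = 0
  rw [← mul_assoc, ← mul_assoc, ← hu]
  simp only [mul_assoc] at huψ ⊢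
  rw [huψ, mul_zero, mul_zero]

theorem SupportedNear.controlled_mul {Y : Set X} (hρ : Nondegenerate ρ) (hS : SupportedNear ρ Y S)
    (hT : Controlled ρ T) : SupportedNear ρ Y (T * S) := by
  obtain ⟨rT, hrT, hTp⟩ := hT
  obtain ⟨rS, hrS, hSY⟩ := hS
  refine ⟨rS + rT + 2, by positivity, fun φ hφ => ⟨?_, ?_⟩⟩
  · refine map_mul_mem_of_hasCompactSupport isClosed_singleton _ φ fun φ' hφ' hφ'φ => ?_
    obtain ⟨u, -, hu_near, hu, -⟩ := hTp.exists_cutoff hρ hrT hφ'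
    have huS : ρ u * S = 0 := (hSY u fun y hy => by
      obtain ⟨x, hx, hyx⟩ := hu_near y hy
      linarith [hφ x (hφ'φ.trans (subset_tsupport _) hx),
        infDist_le_infDist_add_dist (s := Y) (x := x) (y := y), dist_comm x y]).1
    show ρ φ' * (T * S) = 0
    rw [← mul_assoc, ← hu, mul_assoc, huS, mul_zero]
  · rw [mul_assoc, (hSY φ fun x hx => by linarith [hφ x hx]).2, mul_zero]

theorem SupportedNear.mul_controlled {Y : Set X} (hρ : Nondegenerate ρ) (hS : SupportedNear ρ Y S)
    (hT : Controlled ρ T) : SupportedNear ρ Y (S * T) := by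
  obtain ⟨rT, hrT, hTp⟩ := hT
  obtain ⟨rS, hrS, hSY⟩ := hS
  refine ⟨rS + rT + 2, by positivity, fun φ hφ => ⟨?_, ?_⟩⟩
  · rw [← mul_assoc, (hSY φ fun x hx => by linarith [hφ x hx]).1, zero_mul]
  · refine mul_map_mem_of_hasCompactSupport isClosed_singleton _ φ fun φ' hφ' hφ'φ => ?_
    obtain ⟨u, -, hu_near, -, hu⟩ := hTp.exists_cutoff hρ hrT hφ'
    have hSu : S * ρ u = 0 := (hSY u fun y hy => by
      obtain ⟨x, hx, hyx⟩ := hu_near y hy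
      linarith [hφ x (hφ'φ.trans (subset_tsupport _) hx),
        infDist_le_infDist_add_dist (s := Y) (x := x) (y := y), dist_comm x y]).2
    show S * T * ρ φ' = 0
    rw [mul_assoc, ← hu]
    simp only [← mul_assoc]
    rw [hSu, zero_mul, zero_mul]

theorem LocallyCompact.controlled_mul (hρ : Nondegenerate ρ) (hS : LocallyCompact ρ S)
    (hT : Controlled ρ T) : LocallyCompact ρ (T * S) := by
  obtain ⟨r, hr, hTp⟩ := hT
  refine fun φ => ⟨?_, by rw [mul_assoc]; exact (hS φ).2.clm_mul T⟩
  refine map_mul_mem_of_hasCompactSupport isClosed_setOfPred_isCompactOperator _ φ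
    fun φ' hφ' _ => ?_
  obtain ⟨u, -, -, hu, -⟩ := hTp.exists_cutoff hρ hr hφ'
  show IsCompactOperator ⇑(ρ φ' * (T * S))
  rw [← mul_assoc, ← hu, mul_assoc]
  exact (hS u).1.clm_mul _

theorem LocallyCompact.mul_controlled (hρ : Nondegenerate ρ) (hS : LocallyCompact ρ S)
    (hT : Controlled ρ T) : LocallyCompact ρ (S * T) := by
  obtain ⟨r, hr, hTp⟩ := hT
  refine fun φ => ⟨by rw [← mul_assoc]; exact (hS φ).1.mul_clm T, ?_⟩
  refine mul_map_mem_of_hasCompactSupport isClosed_setOfPred_isCompactOperator _ φ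
    fun φ' hφ' _ => ?_
  obtain ⟨u, -, -, -, hu⟩ := hTp.exists_cutoff hρ hr hφ'
  show IsCompactOperator ⇑(S * T * ρ φ')
  rw [show S * T * ρ φ' = S * ρ u * (T * ρ φ') by
    rw [mul_assoc, mul_assoc, ← mul_assoc (ρ u), hu]]
  exact (hS u).2.mul_clm _

theorem Pseudolocal.mul (hρ : Nondegenerate ρ) (hTc : Controlled ρ T) (hT : Pseudolocal ρ T)
    (hS : Pseudolocal ρ S) : Pseudolocal ρ (T * S) := by
  obtain ⟨r, hr, hTp⟩ := hTc
  intro φ ψ hφψ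
  rw [mul_assoc]
  refine map_mul_mem_of_hasCompactSupport isClosed_setOfPred_isCompactOperator _ φ
    fun φ' hφ' hφ'φ => ?_
  obtain ⟨u, hu_cpt, -, hu, -⟩ := hTp.exists_cutoff hρ hr hφ'
  obtain ⟨u₁, u₂, hu₁₂, h₁, h₂⟩ := ZeroAtInftyContinuousMap.exists_add_eq_mul_eq_zero hu_cpt
    ((ZeroAtInftyContinuousMap.disjoint_support_tsupport_of_mul_eq_zero hφψ).mono_left hφ'φ)
  have hsplit : ρ φ' * (T * S * ρ ψ) =
      ρ φ' * T * ρ u₁ * (S * ρ ψ) + ρ φ' * T * (ρ u₂ * S * ρ ψ) :=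
    calc ρ φ' * (T * S * ρ ψ) = ρ φ' * T * ρ (u₁ + u₂) * (S * ρ ψ) := by
          rw [hu₁₂, hu]; simp only [mul_assoc]
      _ = _ := by rw [map_add]; simp only [mul_add, add_mul, mul_assoc]
  show IsCompactOperator ⇑(ρ φ' * (T * S * ρ ψ))
  rw [hsplit]
  exact ((hT φ' _ h₁).mul_clm _).add ((hS _ ψ h₂).clm_mul _)

end Representation

theorem relative_algebras_are_ideals_general
    (ρ : C₀(X, ℂ) →⋆ₙₐ[ℂ] (H →L[ℂ] H)) (hρ : Nondegenerate ρ)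
    (Y : Set X) :
    -- C*(Y⊂X) is a closed two-sided ideal of D*(X):
    IsClosed (RelRoeAlgebra ρ Y) ∧
    RelRoeAlgebra ρ Y ⊆ StructureAlgebra ρ ∧
    (∀ T ∈ StructureAlgebra ρ, ∀ S ∈ RelRoeAlgebra ρ Y,
      T * S ∈ RelRoeAlgebra ρ Y ∧ S * T ∈ RelRoeAlgebra ρ Y) ∧
    -- D*(Y⊂X) is a closed two-sided ideal of D*(X):
    IsClosed (RelStructureAlgebra ρ Y) ∧
    RelStructureAlgebra ρ Y ⊆ StructureAlgebra ρ ∧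
    (∀ T ∈ StructureAlgebra ρ, ∀ S ∈ RelStructureAlgebra ρ Y,
      T * S ∈ RelStructureAlgebra ρ Y ∧ S * T ∈ RelStructureAlgebra ρ Y) ∧
    -- in particular, C*(Y⊂X) is a closed two-sided ideal of C*(X):
    RelRoeAlgebra ρ Y ⊆ RoeAlgebra ρ ∧
    (∀ T ∈ RoeAlgebra ρ, ∀ S ∈ RelRoeAlgebra ρ Y,
      T * S ∈ RelRoeAlgebra ρ Y ∧ S * T ∈ RelRoeAlgebra ρ Y) ∧
    -- and also a closed two-sided ideal of D*(Y⊂X):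
    RelRoeAlgebra ρ Y ⊆ RelStructureAlgebra ρ Y ∧
    (∀ T ∈ RelStructureAlgebra ρ Y, ∀ S ∈ RelRoeAlgebra ρ Y,
      T * S ∈ RelRoeAlgebra ρ Y ∧ S * T ∈ RelRoeAlgebra ρ Y) := by
  have relRoe_ideal : ∀ T ∈ StructureAlgebra ρ, ∀ S ∈ RelRoeAlgebra ρ Y,
      T * S ∈ RelRoeAlgebra ρ Y ∧ S * T ∈ RelRoeAlgebra ρ Y := fun T hT S hS =>
    ⟨map_mem_closure₂ continuous_mul hT hS fun T hT S hS =>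
      ⟨hT.1.mul hρ hS.1, hS.2.1.controlled_mul hρ hT.1, hS.2.2.controlled_mul hρ hT.1⟩,
    map_mem_closure₂ continuous_mul hS hT fun S hS T hT =>
      ⟨hS.1.mul hρ hT.1, hS.2.1.mul_controlled hρ hT.1, hS.2.2.mul_controlled hρ hT.1⟩⟩
  have relStructure_ideal : ∀ T ∈ StructureAlgebra ρ, ∀ S ∈ RelStructureAlgebra ρ Y,
      T * S ∈ RelStructureAlgebra ρ Y ∧ S * T ∈ RelStructureAlgebra ρ Y := fun T hT S hS =>
    ⟨map_mem_closure₂ continuous_mul hT hS fun T hT S hS =>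
      ⟨hT.1.mul hρ hS.1, hT.2.mul hρ hT.1 hS.2.1, hS.2.2.controlled_mul hρ hT.1⟩,
    map_mem_closure₂ continuous_mul hS hT fun S hS T hT =>
      ⟨hS.1.mul hρ hT.1, hS.2.1.mul hρ hS.1 hT.2, hS.2.2.mul_controlled hρ hT.1⟩⟩
  have roe_le : RoeAlgebra ρ ⊆ StructureAlgebra ρ :=
    closure_mono fun T hT => ⟨hT.1, hT.2.pseudolocal⟩
  have relStructure_le : RelStructureAlgebra ρ Y ⊆ StructureAlgebra ρ :=
    closure_mono fun T hT => ⟨hT.1, hT.2.1⟩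
  have relRoe_le_relStructure : RelRoeAlgebra ρ Y ⊆ RelStructureAlgebra ρ Y :=
    closure_mono fun T hT => ⟨hT.1, hT.2.1.pseudolocal, hT.2.2⟩
  exact ⟨isClosed_closure, relRoe_le_relStructure.trans relStructure_le, relRoe_ideal,
    isClosed_closure, relStructure_le, relStructure_ideal,
    closure_mono fun T hT => ⟨hT.1, hT.2.1⟩, fun T hT => relRoe_ideal T (roe_le hT),
    relRoe_le_relStructure, fun T hT => relRoe_ideal T (relStructure_le hT)⟩

theorem relative_algebras_are_ideals
    (ρ : C₀(X, ℂ) →⋆ₙₐ[ℂ] (H →L[ℂ] H)) (hρ : Nondegenerate ρ)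
    (Y : Set X) (hY : IsClosed Y) :
    -- C*(Y⊂X) is a closed two-sided ideal of D*(X):
    IsClosed (RelRoeAlgebra ρ Y) ∧
    RelRoeAlgebra ρ Y ⊆ StructureAlgebra ρ ∧
    (∀ T ∈ StructureAlgebra ρ, ∀ S ∈ RelRoeAlgebra ρ Y,
      T * S ∈ RelRoeAlgebra ρ Y ∧ S * T ∈ RelRoeAlgebra ρ Y) ∧
    -- D*(Y⊂X) is a closed two-sided ideal of D*(X):
    IsClosed (RelStructureAlgebra ρ Y) ∧
    RelStructureAlgebra ρ Y ⊆ StructureAlgebra ρ ∧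
    (∀ T ∈ StructureAlgebra ρ, ∀ S ∈ RelStructureAlgebra ρ Y,
      T * S ∈ RelStructureAlgebra ρ Y ∧ S * T ∈ RelStructureAlgebra ρ Y) ∧
    -- in particular, C*(Y⊂X) is a closed two-sided ideal of C*(X):
    RelRoeAlgebra ρ Y ⊆ RoeAlgebra ρ ∧
    (∀ T ∈ RoeAlgebra ρ, ∀ S ∈ RelRoeAlgebra ρ Y,
      T * S ∈ RelRoeAlgebra ρ Y ∧ S * T ∈ RelRoeAlgebra ρ Y) ∧
    -- and also a closed two-sided ideal of D*(Y⊂X):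
    RelRoeAlgebra ρ Y ⊆ RelStructureAlgebra ρ Y ∧
    (∀ T ∈ RelStructureAlgebra ρ Y, ∀ S ∈ RelRoeAlgebra ρ Y,
      T * S ∈ RelRoeAlgebra ρ Y ∧ S * T ∈ RelRoeAlgebra ρ Y) :=
  relative_algebras_are_ideals_general ρ hρ Y
end

section
/- If T ∈ B(H) is locally compact with respect to ρ, then VTV* ∈ B(H') is locally compact with respect to ρ'; and if T is pseudolocal with respect to ρ, then VTV* is pseudolocal with respect to ρ'. -/
/-
Pulling back along the cocompact map `f` turns `ρ'(φ)` into `ρ(φ ∘ f)`, and `V` intertwines the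
two modulo compact operators: `ρ'(φ) V ≡ V ρ(φ ∘ f)` and, taking adjoints, `V* ρ'(φ) ≡ ρ(φ ∘ f) V*`.
Hence `ρ'(φ) VTV* ≡ V ρ(φ ∘ f) T V*` and `VTV* ρ'(φ) ≡ V T ρ(φ ∘ f) V*`, and since `φ ψ = 0` forces
`(φ ∘ f)(ψ ∘ f) = 0`, both properties pass from `T` to `VTV*`. The adjoint step is Schauder's
theorem, which in Hilbert spaces follows from `‖K* y‖² = re ⟪K K* y, y⟫ ≤ ‖K K* y‖ ‖y‖`.
-/

open Metric ZeroAtInfty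

variable {X : Type*} [MetricSpace X]
variable {H : Type*} [NormedAddCommGroup H] [InnerProductSpace ℂ H] [CompleteSpace H]

variable {X' : Type*} [MetricSpace X']
variable {H' : Type*} [NormedAddCommGroup H'] [InnerProductSpace ℂ H'] [CompleteSpace H']

/-- Conjugation `Ad_V : T ↦ V T V*` by a linear isometry `V : H → H'`. -/
noncomputable def AdV (V : H →ₗᵢ[ℂ] H') (T : H →L[ℂ] H) : H' →L[ℂ] H' :=
  V.toContinuousLinearMap ∘L T ∘L ContinuousLinearMap.adjoint V.toContinuousLinearMap

/-- `V` coarsely covers `f` with propagation at most `ε`: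
`ρ'(ψ) V ρ(φ) = 0` whenever `d(x', f(x)) > ε` for all `x' ∈ supp ψ`, `x ∈ supp φ`. -/
def CoarselyCovers (ρ : C₀(X, ℂ) →⋆ₙₐ[ℂ] (H →L[ℂ] H))
    (ρ' : C₀(X', ℂ) →⋆ₙₐ[ℂ] (H' →L[ℂ] H'))
    (V : H →ₗᵢ[ℂ] H') (f : X → X') (ε : ℝ) : Prop :=
  ∀ (φ : C₀(X, ℂ)) (ψ : C₀(X', ℂ)),
    (∀ x' ∈ tsupport ⇑ψ, ∀ x ∈ tsupport ⇑φ, ε < dist x' (f x)) →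
    ρ' ψ ∘L V.toContinuousLinearMap ∘L ρ φ = 0

/-- `V` topologically covers `f`: `ρ'(φ) V − V ρ(φ∘f)` is compact for every `φ ∈ C₀(X')`. -/
def TopologicallyCovers (ρ : C₀(X, ℂ) →⋆ₙₐ[ℂ] (H →L[ℂ] H))
    (ρ' : C₀(X', ℂ) →⋆ₙₐ[ℂ] (H' →L[ℂ] H'))
    (V : H →ₗᵢ[ℂ] H') (f : X → X') : Prop :=
  ∀ (φ : C₀(X', ℂ)) (ψ : C₀(X, ℂ)), ⇑ψ = ⇑φ ∘ f →
    IsCompactOperator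
      ⇑(ρ' φ ∘L V.toContinuousLinearMap - V.toContinuousLinearMap ∘L ρ ψ)

open ContinuousLinearMap

section CompactOperator

variable {𝕜 E F G : Type*} [NontriviallyNormedField 𝕜]
  [NormedAddCommGroup E] [NormedSpace 𝕜 E] [NormedAddCommGroup F] [NormedSpace 𝕜 F]
  [NormedAddCommGroup G] [NormedSpace 𝕜 G]

theorem IsCompactOperator.of_norm_sq_le [CompleteSpace F] {A : E →L[𝕜] F} {C : E →L[𝕜] G}
    (hC : IsCompactOperator C) (hAC : ∀ x, ‖A x‖ ^ 2 ≤ ‖C x‖ * ‖x‖) : IsCompactOperator A := by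
  refine (isCompactOperator_iff_isCompact_closure_image_closedBall (A : E →ₗ[𝕜] F) one_pos).2
    ((TotallyBounded.closure ?_).isCompact_of_isClosed isClosed_closure)
  have hCB : TotallyBounded (C '' closedBall 0 1) :=
    (hC.isCompact_closure_image_closedBall (f := (C : E →ₗ[𝕜] G)) 1).totallyBounded.subset
      subset_closure
  rw [Metric.totallyBounded_iff]
  intro ε hε
  -- an `ε² / 2`-net `C '' s` of `C '' closedBall 0 1` yields the `ε`-net `A '' s`
  obtain ⟨s, hsB, hsfin, hcover⟩ := (Set.exists_subset_image_finite_and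
    (p := fun t ↦ C '' closedBall 0 1 ⊆ ⋃ y ∈ t, {z | dist z y < ε ^ 2 / 2})).1
    (hCB.exists_subset (dist_mem_uniformity (show 0 < ε ^ 2 / 2 by positivity)))
  refine ⟨A '' s, hsfin.image A, ?_⟩
  rintro _ ⟨x, hx, rfl⟩
  obtain ⟨_, ⟨y, hy, rfl⟩, hCxy⟩ := Set.mem_iUnion₂.1 (hcover (Set.mem_image_of_mem C hx))
  refine Set.mem_iUnion₂.2 ⟨A y, Set.mem_image_of_mem A hy, ?_⟩
  have hxy : ‖x - y‖ ≤ 2 := by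
    have hx' := mem_closedBall_zero_iff.1 hx
    have hy' := mem_closedBall_zero_iff.1 (hsB hy)
    linarith [norm_sub_le x y]
  have hsq : dist (A x) (A y) ^ 2 < ε ^ 2 := calc
    dist (A x) (A y) ^ 2 = ‖A (x - y)‖ ^ 2 := by rw [dist_eq_norm, map_sub]
    _ ≤ ‖C (x - y)‖ * ‖x - y‖ := hAC _
    _ ≤ ‖C (x - y)‖ * 2 := by gcongr
    _ < ε ^ 2 := by
      rw [map_sub, ← dist_eq_norm]
      have : dist (C x) (C y) < ε ^ 2 / 2 := hCxy
      linarith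
  exact lt_of_pow_lt_pow_left₀ 2 hε.le hsq

def EqModCompact (A B : E →L[𝕜] F) : Prop :=
  IsCompactOperator (A - B)

theorem EqModCompact.trans {A B C : E →L[𝕜] F} (hAB : EqModCompact A B)
    (hBC : EqModCompact B C) : EqModCompact A C := by
  have := IsCompactOperator.add hAB hBC
  rwa [← FunLike.coe_add, sub_add_sub_cancel] at this

theorem EqModCompact.isCompactOperator {A B : E →L[𝕜] F} (hAB : EqModCompact A B)
    (hB : IsCompactOperator B) : IsCompactOperator A := by
  simpa using IsCompactOperator.add hAB hB

theorem EqModCompact.clm_comp {B B' : E →L[𝕜] F} (h : EqModCompact B B') (A : F →L[𝕜] G) :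
    EqModCompact (A ∘L B) (A ∘L B') := by
  have := IsCompactOperator.clm_comp h A
  rwa [← coe_comp, comp_sub] at this

theorem EqModCompact.comp_clm {A A' : F →L[𝕜] G} (h : EqModCompact A A') (B : E →L[𝕜] F) :
    EqModCompact (A ∘L B) (A' ∘L B) := by
  have := IsCompactOperator.comp_clm h B
  rwa [← coe_comp, sub_comp] at this

end CompactOperator

section Adjoint

variable {𝕜 E F : Type*} [RCLike 𝕜]
  [NormedAddCommGroup E] [InnerProductSpace 𝕜 E] [CompleteSpace E]
  [NormedAddCommGroup F] [InnerProductSpace 𝕜 F] [CompleteSpace F]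

theorem IsCompactOperator.adjoint {K : E →L[𝕜] F} (hK : IsCompactOperator K) :
    IsCompactOperator (ContinuousLinearMap.adjoint K) :=
  .of_norm_sq_le (C := K ∘L ContinuousLinearMap.adjoint K) (hK.comp_clm _) fun y ↦ by
    rw [apply_norm_sq_eq_inner_adjoint_left, adjoint_adjoint]
    exact (RCLike.re_le_norm _).trans (norm_inner_le_norm _ _)

theorem EqModCompact.adjoint {A B : E →L[𝕜] F} (h : EqModCompact A B) :
    EqModCompact (adjoint A) (adjoint B) := by
  have := IsCompactOperator.adjoint h
  rwa [map_sub] at this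

end Adjoint

theorem isCompactOperator_adV (V : H →ₗᵢ[ℂ] H') {T : H →L[ℂ] H} (hT : IsCompactOperator T) :
    IsCompactOperator (AdV V T) :=
  (hT.comp_clm _).clm_comp V.toContinuousLinearMap

section Covering

variable {ρ : C₀(X, ℂ) →⋆ₙₐ[ℂ] (H →L[ℂ] H)} {ρ' : C₀(X', ℂ) →⋆ₙₐ[ℂ] (H' →L[ℂ] H')}
  {V : H →ₗᵢ[ℂ] H'} {F : CocompactMap X X'}

theorem TopologicallyCovers.eqModCompact (hV : TopologicallyCovers ρ ρ' V F) (φ : C₀(X', ℂ)) :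
    EqModCompact (ρ' φ ∘L V.toContinuousLinearMap) (V.toContinuousLinearMap ∘L ρ (φ.comp F)) :=
  hV φ _ rfl

theorem TopologicallyCovers.adjoint_eqModCompact (hV : TopologicallyCovers ρ ρ' V F)
    (φ : C₀(X', ℂ)) :
    EqModCompact (adjoint V.toContinuousLinearMap ∘L ρ' φ)
      (ρ (φ.comp F) ∘L adjoint V.toContinuousLinearMap) := by
  have := (hV.eqModCompact (star φ)).adjoint
  rwa [adjoint_comp, adjoint_comp, ← star_eq_adjoint, ← star_eq_adjoint, ← map_star,
    ← map_star, star_star, show star ((star φ).comp F) = φ.comp F by ext; simp] at this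

theorem TopologicallyCovers.mul_adV_eqModCompact (hV : TopologicallyCovers ρ ρ' V F)
    (T : H →L[ℂ] H) (φ : C₀(X', ℂ)) :
    EqModCompact (ρ' φ * AdV V T) (AdV V (ρ (φ.comp F) * T)) :=
  (hV.eqModCompact φ).comp_clm (T ∘L adjoint V.toContinuousLinearMap)

theorem TopologicallyCovers.adV_mul_eqModCompact (hV : TopologicallyCovers ρ ρ' V F)
    (T : H →L[ℂ] H) (φ : C₀(X', ℂ)) :
    EqModCompact (AdV V T * ρ' φ) (AdV V (T * ρ (φ.comp F))) :=
  (hV.adjoint_eqModCompact φ).clm_comp (V.toContinuousLinearMap ∘L T)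

end Covering

theorem adV_locallyCompact_and_pseudolocal_general
    (ρ : C₀(X, ℂ) →⋆ₙₐ[ℂ] (H →L[ℂ] H))
    (ρ' : C₀(X', ℂ) →⋆ₙₐ[ℂ] (H' →L[ℂ] H'))
    (f : X → X') (hf : Continuous f)
    (hfproper : ∀ K : Set X', IsCompact K → IsCompact (f ⁻¹' K))
    (V : H →ₗᵢ[ℂ] H') (hV : TopologicallyCovers ρ ρ' V f)
    (T : H →L[ℂ] H) :
    (LocallyCompact ρ T → LocallyCompact ρ' (AdV V T)) ∧
    (Pseudolocal ρ T → Pseudolocal ρ' (AdV V T)) := by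
  let F : CocompactMap X X' := ⟨⟨f, hf⟩, CocompactMap.tendsto_of_forall_preimage hfproper⟩
  have hVF : TopologicallyCovers ρ ρ' V F := hV
  refine ⟨fun hT φ ↦ ⟨?_, ?_⟩, fun hT φ ψ hφψ ↦ ?_⟩
  · exact (hVF.mul_adV_eqModCompact T φ).isCompactOperator
      (isCompactOperator_adV V (hT _).1)
  · exact (hVF.adV_mul_eqModCompact T φ).isCompactOperator
      (isCompactOperator_adV V (hT _).2)
  · have hpull : φ.comp F * ψ.comp F = 0 := congrArg (ZeroAtInftyContinuousMap.comp · F) hφψ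
    exact (((hVF.mul_adV_eqModCompact T φ).comp_clm (ρ' ψ)).trans
      (hVF.adV_mul_eqModCompact (ρ (φ.comp F) * T) ψ)).isCompactOperator
      (isCompactOperator_adV V (hT _ _ hpull))

/-- conjugation by an isometry topologically covering a continuous
proper map preserves local compactness and pseudolocality. -/
theorem adV_locallyCompact_and_pseudolocal
    [ProperSpace X] [ProperSpace X']
    (ρ : C₀(X, ℂ) →⋆ₙₐ[ℂ] (H →L[ℂ] H)) (hρ : Nondegenerate ρ)
    (ρ' : C₀(X', ℂ) →⋆ₙₐ[ℂ] (H' →L[ℂ] H')) (hρ' : Nondegenerate ρ')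
    (f : X → X') (hf : Continuous f)
    (hfproper : ∀ K : Set X', IsCompact K → IsCompact (f ⁻¹' K))
    (V : H →ₗᵢ[ℂ] H') (hV : TopologicallyCovers ρ ρ' V f)
    (T : H →L[ℂ] H) :
    (LocallyCompact ρ T → LocallyCompact ρ' (AdV V T)) ∧
    (Pseudolocal ρ T → Pseudolocal ρ' (AdV V T)) :=
  adV_locallyCompact_and_pseudolocal_general ρ ρ' f hf hfproper V hV T
end
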